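/- Let f : ℝ^d → ℝ be written as f(x) = E_{z∼D_m}[f(x,z)] for each m, with f(·,z) almost surely L-smooth and μ-strongly convex (μ ≥ 0), and let x_* be a minimizer of f. Let x^1, ..., x^M ∈ ℝ^d with average x̂ and V = (1/M) Σ_m ‖x^m - x̂‖², let g^m = ∇f(x^m, z_m) with z_1, ..., z_M independent, z_m ∼ D_m, and set y^m = x^m - γ g^m with average ŷ and V' = (1/M) Σ_m ‖y^m - ŷ‖². If 0 < γ ≤ 1/(2L), then E[V'] ≤ (1 - γμ)V + 2γ(f(x̂) - f(x_*)) + 2γ²σ_opt², where σ_opt² = (1/M) Σ_m E_{z_m∼D_m}‖∇f(x_*, z_m)‖². -/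

import Mathlib

/-!
Replacing the average `ŷ` by `x̂` can only increase `∑ ‖yᵐ - ŷ‖²`, since the average minimizes the
sum of squared distances; after that the machines decouple. For one machine, expand
`‖x - γ g - x̂‖²`, bound the cross term by strong convexity of `f` between `x` and `x̂`, and the second
moment by `E‖∇f(x, z)‖² ≤ 4L (f x - f x_*) + 2 E‖∇f(x_*, z)‖²`, which follows from co-coercivity of
each sampled gradient and `∇f(x_*) = 0`. For `γ ≤ 1/(2L)` the term `4Lγ² (f x - f x_*)` is absorbed
by the `-2γ f x` coming from convexity.
-/

open MeasureTheory ProbabilityTheory Finset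
open scoped InnerProductSpace

/-- `f : ℝ^d → ℝ` is `L`-smooth and `μ`-strongly convex (`μ = 0` meaning merely convex),
witnessed by the gradient map `df`:
`(μ/2)‖x - y‖² ≤ f x - f y - ⟪df y, x - y⟫ ≤ (L/2)‖x - y‖²` for all `x, y`. -/
def SmoothSC {d : ℕ} (L μ : ℝ) (f : EuclideanSpace ℝ (Fin d) → ℝ)
    (df : EuclideanSpace ℝ (Fin d) → EuclideanSpace ℝ (Fin d)) : Prop :=
  ∀ x y : EuclideanSpace ℝ (Fin d),
    μ / 2 * ‖x - y‖ ^ 2 ≤ f x - f y - ⟪df y, x - y⟫_ℝ ∧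
    f x - f y - ⟪df y, x - y⟫_ℝ ≤ L / 2 * ‖x - y‖ ^ 2

/-- The Bregman divergence `D_f(x, y) = f x - f y - ⟪∇f y, x - y⟫` of `f`,
with gradient map `df`. -/
noncomputable def Breg {d : ℕ} (f : EuclideanSpace ℝ (Fin d) → ℝ)
    (df : EuclideanSpace ℝ (Fin d) → EuclideanSpace ℝ (Fin d))
    (x y : EuclideanSpace ℝ (Fin d)) : ℝ :=
  f x - f y - ⟪df y, x - y⟫_ℝ

theorem sum_sub_average_eq_zero {ι E : Type*} [AddCommGroup E] [Module ℝ E]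
    (s : Finset ι) (y : ι → E) :
    ∑ i ∈ s, (y i - (#s : ℝ)⁻¹ • ∑ j ∈ s, y j) = 0 := by
  rcases s.eq_empty_or_nonempty with rfl | hs
  · simp
  rw [sum_sub_distrib, sum_const, ← Nat.cast_smul_eq_nsmul ℝ,
    smul_inv_smul₀ (by simp [hs.ne_empty]), sub_self]

theorem sum_norm_sub_average_sq_le {ι E : Type*} [NormedAddCommGroup E] [InnerProductSpace ℝ E]
    (s : Finset ι) (y : ι → E) (a : E) :
    ∑ i ∈ s, ‖y i - (#s : ℝ)⁻¹ • ∑ j ∈ s, y j‖ ^ 2 ≤ ∑ i ∈ s, ‖y i - a‖ ^ 2 := by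
  set c := (#s : ℝ)⁻¹ • ∑ j ∈ s, y j
  have hsplit : ∀ i, ‖y i - a‖ ^ 2 = ‖y i - c‖ ^ 2 + 2 * ⟪y i - c, c - a⟫_ℝ + ‖c - a‖ ^ 2 := by
    intro i
    rw [← norm_add_sq_real, sub_add_sub_cancel]
  have hcross : ∑ i ∈ s, 2 * ⟪y i - c, c - a⟫_ℝ = 0 := by
    rw [← mul_sum, ← sum_inner, sum_sub_average_eq_zero, inner_zero_left, mul_zero]
  simp only [hsplit, sum_add_distrib, hcross, add_zero]
  exact le_add_of_nonneg_right (sum_nonneg fun _ _ => by positivity)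

theorem breg_sub_inner {d : ℕ} (f : EuclideanSpace ℝ (Fin d) → ℝ)
    (df : EuclideanSpace ℝ (Fin d) → EuclideanSpace ℝ (Fin d)) (c x y : EuclideanSpace ℝ (Fin d)) :
    Breg (fun u => f u - ⟪c, u⟫_ℝ) (fun u => df u - c) x y = Breg f df x y := by
  simp only [Breg, inner_sub_left, inner_sub_right]
  ring

namespace SmoothSC

variable {d : ℕ} {L μ : ℝ} {f : EuclideanSpace ℝ (Fin d) → ℝ}
  {df : EuclideanSpace ℝ (Fin d) → EuclideanSpace ℝ (Fin d)}

theorem mul_norm_sub_sq_le_breg (h : SmoothSC L μ f df) (x y : EuclideanSpace ℝ (Fin d)) :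
    μ / 2 * ‖x - y‖ ^ 2 ≤ Breg f df x y :=
  (h x y).1

theorem breg_le (h : SmoothSC L μ f df) (x y : EuclideanSpace ℝ (Fin d)) :
    Breg f df x y ≤ L / 2 * ‖x - y‖ ^ 2 :=
  (h x y).2

theorem breg_nonneg (h : SmoothSC L μ f df) (hμ : 0 ≤ μ) (x y : EuclideanSpace ℝ (Fin d)) :
    0 ≤ Breg f df x y :=
  (by positivity : 0 ≤ μ / 2 * ‖x - y‖ ^ 2).trans (h.mul_norm_sub_sq_le_breg x y)

theorem sub_inner (h : SmoothSC L μ f df) (c : EuclideanSpace ℝ (Fin d)) :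
    SmoothSC L μ (fun u => f u - ⟪c, u⟫_ℝ) (fun u => df u - c) := by
  intro x y
  have hbreg := breg_sub_inner f df c x y
  unfold Breg at hbreg
  rw [hbreg]
  exact h x y

theorem apply_sub_inv_smul_le (h : SmoothSC L μ f df) (hL : 0 < L)
    (x : EuclideanSpace ℝ (Fin d)) :
    f (x - L⁻¹ • df x) ≤ f x - (2 * L)⁻¹ * ‖df x‖ ^ 2 := by
  have hup := h.breg_le (x - L⁻¹ • df x) x
  simp only [Breg, sub_sub_cancel_left, inner_neg_right, real_inner_smul_right, norm_neg,
    norm_smul, real_inner_self_eq_norm_sq, mul_pow, Real.norm_eq_abs, sq_abs] at hup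
  have : L / 2 * (L⁻¹ ^ 2 * ‖df x‖ ^ 2) = L⁻¹ * ‖df x‖ ^ 2 - (2 * L)⁻¹ * ‖df x‖ ^ 2 := by
    field_simp; ring
  linarith

theorem grad_eq_zero_of_forall_le (h : SmoothSC L μ f df) (hL : 0 < L)
    {xstar : EuclideanSpace ℝ (Fin d)} (hmin : ∀ y, f xstar ≤ f y) : df xstar = 0 := by
  have hdesc := (hmin _).trans (h.apply_sub_inv_smul_le hL xstar)
  have hsq : ‖df xstar‖ ^ 2 ≤ 0 :=
    nonpos_of_mul_nonpos_left (by linarith) (by positivity : (0 : ℝ) < (2 * L)⁻¹)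
  simpa using hsq

theorem norm_sub_sq_le_breg (h : SmoothSC L μ f df) (hL : 0 < L) (hμ : 0 ≤ μ)
    (x y : EuclideanSpace ℝ (Fin d)) :
    ‖df x - df y‖ ^ 2 ≤ 2 * L * Breg f df x y := by
  -- `φ` has gradient `df - df y`, so it is minimized at `y`; the descent step from `x` bounds
  -- `φ x - φ y = Breg f df x y` from below.
  set φ := fun u => f u - ⟪df y, u⟫_ℝ
  have hφ : SmoothSC L μ φ (fun u => df u - df y) := h.sub_inner (df y)
  have hφmin : ∀ u, φ y ≤ φ u := by
    intro u
    simpa [Breg] using hφ.breg_nonneg hμ u y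
  have hdesc := (hφmin _).trans (hφ.apply_sub_inv_smul_le hL x)
  have hφbreg : φ x - φ y = Breg f df x y := by
    simp only [φ, Breg, inner_sub_right]
    ring
  have h2L : (0 : ℝ) < 2 * L := by positivity
  calc ‖df x - df y‖ ^ 2 = 2 * L * ((2 * L)⁻¹ * ‖df x - df y‖ ^ 2) := by
        rw [mul_inv_cancel_left₀ h2L.ne']
    _ ≤ 2 * L * Breg f df x y := by
        rw [← hφbreg]
        exact mul_le_mul_of_nonneg_left (by linarith) h2L.le

end SmoothSC

theorem integrable_norm_sub_smul_sub_sq {Z E : Type*} [MeasurableSpace Z] {ν : Measure Z}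
    [IsFiniteMeasure ν] [NormedAddCommGroup E] [InnerProductSpace ℝ E] {g : Z → E}
    (hg : MemLp g 2 ν) (γ : ℝ) (x c : E) :
    Integrable (fun z => ‖x - γ • g z - c‖ ^ 2) ν :=
  (((memLp_const x).sub (hg.const_smul γ)).sub (memLp_const c)).integrable_norm_pow two_ne_zero

theorem integral_norm_sub_smul_sub_sq {Z E : Type*} [MeasurableSpace Z] {ν : Measure Z}
    [IsProbabilityMeasure ν] [NormedAddCommGroup E] [InnerProductSpace ℝ E] [CompleteSpace E]
    {g : Z → E} (hg : MemLp g 2 ν) (γ : ℝ) (x c : E) :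
    ∫ z, ‖x - γ • g z - c‖ ^ 2 ∂ν
      = ‖x - c‖ ^ 2 - 2 * γ * ⟪∫ z, g z ∂ν, x - c⟫_ℝ + γ ^ 2 * ∫ z, ‖g z‖ ^ 2 ∂ν := by
  have hexpand : ∀ z, ‖x - γ • g z - c‖ ^ 2
      = ‖x - c‖ ^ 2 - 2 * γ * ⟪x - c, g z⟫_ℝ + γ ^ 2 * ‖g z‖ ^ 2 := by
    intro z
    rw [sub_right_comm, norm_sub_sq_real, real_inner_smul_right, norm_smul, mul_pow,
      Real.norm_eq_abs, sq_abs]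
    ring
  have hg₁ : Integrable g ν := hg.integrable one_le_two
  have hinner : Integrable (fun z => 2 * γ * ⟪x - c, g z⟫_ℝ) ν := (hg₁.const_inner _).const_mul _
  have hfirst : Integrable (fun z => ‖x - c‖ ^ 2 - 2 * γ * ⟪x - c, g z⟫_ℝ) ν :=
    (integrable_const _).sub hinner
  simp_rw [hexpand]
  rw [integral_add hfirst ((hg.integrable_norm_pow two_ne_zero).const_mul _),
    integral_sub (integrable_const _) hinner, integral_const_mul,
    integral_const_mul, integral_const, probReal_univ, one_smul, integral_inner hg₁,
    real_inner_comm]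

theorem MeasureTheory.MeasurePreserving.integral_comp_of_aestronglyMeasurable
    {α β E : Type*} [MeasurableSpace α] [MeasurableSpace β] [NormedAddCommGroup E]
    [NormedSpace ℝ E] {μ : Measure α} {ν : Measure β} {f : α → β} (hf : MeasurePreserving f μ ν)
    {g : β → E} (hg : AEStronglyMeasurable g ν) :
    ∫ x, g (f x) ∂μ = ∫ y, g y ∂ν := by
  rw [← hf.map_eq] at hg ⊢
  exact (integral_map hf.measurable.aemeasurable hg).symm

section Expectation

variable {d : ℕ} {L μ : ℝ} {Z : Type*} [MeasurableSpace Z] {ν : Measure Z}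
  {F : EuclideanSpace ℝ (Fin d) → Z → ℝ}
  {dF : EuclideanSpace ℝ (Fin d) → Z → EuclideanSpace ℝ (Fin d)}
  {f : EuclideanSpace ℝ (Fin d) → ℝ} {df : EuclideanSpace ℝ (Fin d) → EuclideanSpace ℝ (Fin d)}

theorem integrable_breg (hF : ∀ x, Integrable (F x) ν) (hdF : ∀ x, Integrable (dF x) ν)
    (x y : EuclideanSpace ℝ (Fin d)) :
    Integrable (fun z => Breg (F · z) (dF · z) x y) ν :=
  ((hF x).sub (hF y)).sub ((hdF y).inner_const (x - y))

theorem integral_breg (hF : ∀ x, Integrable (F x) ν) (hdF : ∀ x, Integrable (dF x) ν)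
    (hf : ∀ x, f x = ∫ z, F x z ∂ν) (hdf : ∀ x, df x = ∫ z, dF x z ∂ν)
    (x y : EuclideanSpace ℝ (Fin d)) :
    ∫ z, Breg (F · z) (dF · z) x y ∂ν = Breg f df x y := by
  have hFxy : Integrable (fun z => F x z - F y z) ν := (hF x).sub (hF y)
  simp only [Breg]
  rw [integral_sub hFxy ((hdF y).inner_const (x - y)), integral_sub (hF x) (hF y), ← hf, ← hf,
    hdf, real_inner_comm, ← integral_inner (hdF y)]
  simp_rw [real_inner_comm (x - y)]

theorem SmoothSC.of_integral [IsProbabilityMeasure ν]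
    (hsmooth : ∀ᵐ z ∂ν, SmoothSC L μ (F · z) (dF · z))
    (hF : ∀ x, Integrable (F x) ν) (hdF : ∀ x, Integrable (dF x) ν)
    (hf : ∀ x, f x = ∫ z, F x z ∂ν) (hdf : ∀ x, df x = ∫ z, dF x z ∂ν) :
    SmoothSC L μ f df := by
  intro x y
  change _ ≤ Breg f df x y ∧ Breg f df x y ≤ _
  rw [← integral_breg hF hdF hf hdf]
  constructor
  · simpa using integral_mono_ae (integrable_const _) (integrable_breg hF hdF x y)
      (hsmooth.mono fun z hz => hz.mul_norm_sub_sq_le_breg x y)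
  · simpa using integral_mono_ae (integrable_breg hF hdF x y) (integrable_const _)
      (hsmooth.mono fun z hz => hz.breg_le x y)

theorem integral_norm_grad_sq_le [IsProbabilityMeasure ν] (hL : 0 < L) (hμ : 0 ≤ μ)
    (hsmooth : ∀ᵐ z ∂ν, SmoothSC L μ (F · z) (dF · z))
    (hF : ∀ x, Integrable (F x) ν) (hdF : ∀ x, MemLp (dF x) 2 ν)
    (hf : ∀ x, f x = ∫ z, F x z ∂ν) (hdf : ∀ x, df x = ∫ z, dF x z ∂ν)
    {xstar : EuclideanSpace ℝ (Fin d)} (hmin : ∀ y, f xstar ≤ f y)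
    (x : EuclideanSpace ℝ (Fin d)) :
    ∫ z, ‖dF x z‖ ^ 2 ∂ν ≤ 4 * L * (f x - f xstar) + 2 * ∫ z, ‖dF xstar z‖ ^ 2 ∂ν := by
  have hdF₁ : ∀ x, Integrable (dF x) ν := fun x => (hdF x).integrable one_le_two
  have hdF₂ : ∀ x, Integrable (fun z => ‖dF x z‖ ^ 2) ν :=
    fun x => (hdF x).integrable_norm_pow two_ne_zero
  have hdfstar : df xstar = 0 :=
    (SmoothSC.of_integral hsmooth hF hdF₁ hf hdf).grad_eq_zero_of_forall_le hL hmin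
  have hbreg : ∫ z, Breg (F · z) (dF · z) x xstar ∂ν = f x - f xstar := by
    rw [integral_breg hF hdF₁ hf hdf]
    simp [Breg, hdfstar]
  have hpt : ∀ᵐ z ∂ν, ‖dF x z‖ ^ 2
      ≤ 4 * L * Breg (F · z) (dF · z) x xstar + 2 * ‖dF xstar z‖ ^ 2 := by
    filter_upwards [hsmooth] with z hz
    have hcoco := hz.norm_sub_sq_le_breg hL hμ x xstar
    have hpar := parallelogram_law_with_norm ℝ (dF x z - dF xstar z) (dF xstar z)
    rw [sub_add_cancel] at hpar
    nlinarith [norm_nonneg (dF x z - dF xstar z - dF xstar z)]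
  calc ∫ z, ‖dF x z‖ ^ 2 ∂ν
      ≤ ∫ z, (4 * L * Breg (F · z) (dF · z) x xstar + 2 * ‖dF xstar z‖ ^ 2) ∂ν :=
        integral_mono_ae (hdF₂ x)
          (((integrable_breg hF hdF₁ x xstar).const_mul _).add ((hdF₂ xstar).const_mul 2)) hpt
    _ = 4 * L * (f x - f xstar) + 2 * ∫ z, ‖dF xstar z‖ ^ 2 ∂ν := by
        rw [integral_add ((integrable_breg hF hdF₁ x xstar).const_mul _)
          ((hdF₂ xstar).const_mul 2), integral_const_mul, integral_const_mul, hbreg]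

theorem integral_norm_sub_smul_sub_sq_le [IsProbabilityMeasure ν] (hL : 0 < L) (hμ : 0 ≤ μ)
    (hsmooth : ∀ᵐ z ∂ν, SmoothSC L μ (F · z) (dF · z))
    (hF : ∀ x, Integrable (F x) ν) (hdF : ∀ x, MemLp (dF x) 2 ν)
    (hf : ∀ x, f x = ∫ z, F x z ∂ν) (hdf : ∀ x, df x = ∫ z, dF x z ∂ν)
    {xstar : EuclideanSpace ℝ (Fin d)} (hmin : ∀ y, f xstar ≤ f y)
    {γ : ℝ} (hγ0 : 0 ≤ γ) (hγ : γ ≤ 1 / (2 * L)) (x c : EuclideanSpace ℝ (Fin d)) :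
    ∫ z, ‖x - γ • dF x z - c‖ ^ 2 ∂ν
      ≤ (1 - γ * μ) * ‖x - c‖ ^ 2 + 2 * γ * (f c - f xstar)
        + 2 * γ ^ 2 * ∫ z, ‖dF xstar z‖ ^ 2 ∂ν := by
  have hfs : SmoothSC L μ f df :=
    SmoothSC.of_integral hsmooth hF (fun x => (hdF x).integrable one_le_two) hf hdf
  have hconv : μ / 2 * ‖x - c‖ ^ 2 ≤ f c - f x + ⟪df x, x - c⟫_ℝ := by
    have := hfs.mul_norm_sub_sq_le_breg c x
    rwa [Breg, norm_sub_rev, ← neg_sub x c, inner_neg_right, sub_neg_eq_add] at this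
  have hmoment := integral_norm_grad_sq_le hL hμ hsmooth hF hdF hf hdf hmin x
  have hγL : γ * (2 * L) ≤ 1 := (le_div_iff₀ (by positivity)).mp hγ
  have hgap : 0 ≤ f x - f xstar := sub_nonneg.2 (hmin x)
  rw [integral_norm_sub_smul_sub_sq (hdF x), ← hdf]
  nlinarith [mul_le_mul_of_nonneg_left hconv (by positivity : (0 : ℝ) ≤ 2 * γ),
    mul_le_mul_of_nonneg_left hmoment (sq_nonneg γ),
    mul_nonneg (mul_nonneg hγ0 hgap) (sub_nonneg.2 hγL)]

end Expectation

theorem iterate_deviation_recursion_general {d M : ℕ} (hM : 0 < M) (L : ℝ) (hL : 0 < L) (μ : ℝ) (hμ : 0 ≤ μ)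
    {Z : Type*} [MeasurableSpace Z] {Ω : Type*} [MeasurableSpace Ω]
    (P : Measure Ω) [IsProbabilityMeasure P]
    (D : Fin M → Measure Z) (hD : ∀ m, IsProbabilityMeasure (D m))
    (F : EuclideanSpace ℝ (Fin d) → Z → ℝ) (dF : EuclideanSpace ℝ (Fin d) → Z → EuclideanSpace ℝ (Fin d))
    (f : EuclideanSpace ℝ (Fin d) → ℝ) (df : EuclideanSpace ℝ (Fin d) → EuclideanSpace ℝ (Fin d))
    (hsmooth : ∀ m, ∀ᵐ z ∂(D m), SmoothSC L μ (fun x => F x z) (fun x => dF x z))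
    (hf : ∀ m x, f x = ∫ z, F x z ∂(D m))
    (hdf : ∀ m x, df x = ∫ z, dF x z ∂(D m))
    (hdFjm : Measurable (fun p : EuclideanSpace ℝ (Fin d) × Z => dF p.1 p.2))
    (hFint : ∀ m x, Integrable (fun z => F x z) (D m))
    (hdFsq : ∀ m x, Integrable (fun z => ‖dF x z‖ ^ 2) (D m))
    (xstar : EuclideanSpace ℝ (Fin d)) (hmin : ∀ y, f xstar ≤ f y)
    (z : Fin M → Ω → Z) (hz : ∀ m, Measurable (z m))
    (hlaw : ∀ m, P.map (z m) = D m)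
    (sopt2 : ℝ)
    (hsopt2 : sopt2 = (M : ℝ)⁻¹ * ∑ m, ∫ w, ‖dF xstar w‖ ^ 2 ∂(D m))
    (x : Fin M → EuclideanSpace ℝ (Fin d))
    (xhat : EuclideanSpace ℝ (Fin d))
    (Vdev : ℝ) (hV : Vdev = (M : ℝ)⁻¹ * ∑ m, ‖x m - xhat‖ ^ 2)
    (γ : ℝ) (hγ0 : 0 < γ) (hγ : γ ≤ 1 / (2 * L)) :
    (∫ ω, (M : ℝ)⁻¹ * ∑ m, ‖(x m - γ • dF (x m) (z m ω)) -
        (M : ℝ)⁻¹ • ∑ j, (x j - γ • dF (x j) (z j ω))‖ ^ 2 ∂P) ≤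
      (1 - γ * μ) * Vdev + 2 * γ * (f xhat - f xstar) + 2 * γ ^ 2 * sopt2 := by
  have hdF : ∀ m v, MemLp (dF v) 2 (D m) := fun m v =>
    (memLp_two_iff_integrable_sq_norm
      (hdFjm.comp measurable_prodMk_left).aestronglyMeasurable).2 (hdFsq m v)
  have hlaw' : ∀ m, MeasurePreserving (z m) P (D m) := fun m => ⟨hz m, hlaw m⟩
  have hstep : ∀ m, Integrable (fun w => ‖x m - γ • dF (x m) w - xhat‖ ^ 2) (D m) :=
    fun m => have := hD m; integrable_norm_sub_smul_sub_sq (hdF m (x m)) γ (x m) xhat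
  have hstepP : ∀ m, Integrable (fun ω => ‖x m - γ • dF (x m) (z m ω) - xhat‖ ^ 2) P :=
    fun m => (hlaw' m).integrable_comp_of_integrable (hstep m)
  calc _ ≤ ∫ ω, (M : ℝ)⁻¹ * ∑ m, ‖x m - γ • dF (x m) (z m ω) - xhat‖ ^ 2 ∂P := by
        refine integral_mono_of_nonneg (ae_of_all _ fun ω => by positivity)
          ((integrable_finsetSum _ fun m _ => hstepP m).const_mul _) (ae_of_all _ fun ω => ?_)
        have hvar := sum_norm_sub_average_sq_le univ (fun j => x j - γ • dF (x j) (z j ω)) xhat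
        rw [card_univ, Fintype.card_fin] at hvar
        exact mul_le_mul_of_nonneg_left hvar (by positivity)
    _ = (M : ℝ)⁻¹ * ∑ m, ∫ w, ‖x m - γ • dF (x m) w - xhat‖ ^ 2 ∂(D m) := by
        rw [integral_const_mul, integral_finsetSum _ fun m _ => hstepP m]
        exact congrArg _ (sum_congr rfl fun m _ =>
          (hlaw' m).integral_comp_of_aestronglyMeasurable (hstep m).aestronglyMeasurable)
    _ ≤ (M : ℝ)⁻¹ * ∑ m, ((1 - γ * μ) * ‖x m - xhat‖ ^ 2 + 2 * γ * (f xhat - f xstar)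
          + 2 * γ ^ 2 * ∫ w, ‖dF xstar w‖ ^ 2 ∂(D m)) := by
        gcongr with m
        have := hD m
        exact integral_norm_sub_smul_sub_sq_le hL hμ (hsmooth m) (hFint m) (hdF m) (hf m) (hdf m)
          hmin hγ0.le hγ (x m) xhat
    _ = (1 - γ * μ) * Vdev + 2 * γ * (f xhat - f xstar) + 2 * γ ^ 2 * sopt2 := by
        have hM' : (M : ℝ) ≠ 0 := by positivity
        rw [hV, hsopt2]
        simp only [sum_add_distrib, ← mul_sum, sum_const, card_univ, Fintype.card_fin,
          nsmul_eq_mul]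
        field_simp

/-- one-step recursion for the iterate deviation. -/
theorem iterate_deviation_recursion {d M : ℕ} (hM : 0 < M) (L : ℝ) (hL : 0 < L) (μ : ℝ) (hμ : 0 ≤ μ)
    {Z : Type*} [MeasurableSpace Z] {Ω : Type*} [MeasurableSpace Ω]
    (P : Measure Ω) [IsProbabilityMeasure P]
    (D : Fin M → Measure Z) (hD : ∀ m, IsProbabilityMeasure (D m))
    (F : EuclideanSpace ℝ (Fin d) → Z → ℝ) (dF : EuclideanSpace ℝ (Fin d) → Z → EuclideanSpace ℝ (Fin d))
    (f : EuclideanSpace ℝ (Fin d) → ℝ) (df : EuclideanSpace ℝ (Fin d) → EuclideanSpace ℝ (Fin d))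
    (hsmooth : ∀ m, ∀ᵐ z ∂(D m), SmoothSC L μ (fun x => F x z) (fun x => dF x z))
    (hf : ∀ m x, f x = ∫ z, F x z ∂(D m))
    (hdf : ∀ m x, df x = ∫ z, dF x z ∂(D m))
    (hFjm : Measurable (fun p : EuclideanSpace ℝ (Fin d) × Z => F p.1 p.2))
    (hdFjm : Measurable (fun p : EuclideanSpace ℝ (Fin d) × Z => dF p.1 p.2))
    (hFint : ∀ m x, Integrable (fun z => F x z) (D m))
    (hdFsq : ∀ m x, Integrable (fun z => ‖dF x z‖ ^ 2) (D m))
    (xstar : EuclideanSpace ℝ (Fin d)) (hmin : ∀ y, f xstar ≤ f y)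
    (z : Fin M → Ω → Z) (hz : ∀ m, Measurable (z m))
    (hindep : iIndepFun z P)
    (hlaw : ∀ m, P.map (z m) = D m)
    (sopt2 : ℝ)
    (hsopt2 : sopt2 = (M : ℝ)⁻¹ * ∑ m, ∫ w, ‖dF xstar w‖ ^ 2 ∂(D m))
    (x : Fin M → EuclideanSpace ℝ (Fin d))
    (xhat : EuclideanSpace ℝ (Fin d)) (hxhat : xhat = (M : ℝ)⁻¹ • ∑ m, x m)
    (Vdev : ℝ) (hV : Vdev = (M : ℝ)⁻¹ * ∑ m, ‖x m - xhat‖ ^ 2)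
    (γ : ℝ) (hγ0 : 0 < γ) (hγ : γ ≤ 1 / (2 * L)) :
    (∫ ω, (M : ℝ)⁻¹ * ∑ m, ‖(x m - γ • dF (x m) (z m ω)) -
        (M : ℝ)⁻¹ • ∑ j, (x j - γ • dF (x j) (z j ω))‖ ^ 2 ∂P) ≤
      (1 - γ * μ) * Vdev + 2 * γ * (f xhat - f xstar) + 2 * γ ^ 2 * sopt2 :=
  iterate_deviation_recursion_general hM L hL μ hμ P D hD F dF f df hsmooth hf hdf hdFjm hFint hdFsq
    xstar hmin z hz hlaw sopt2 hsopt2 x xhat Vdev hV γ hγ0 hγ
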